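/- arXiv:1604.06842 — 2 statements merged into one kernel-verified Lean document; each statement's English description precedes it below -/
import Mathlib

section
/- Let H be an N×M complex matrix and let B be an M×D complex matrix of rank D (a square-root factor of the transmit covariance S_x = B Bᴴ). Suppose the N×D matrix Φ = H B admits a truncated singular value decomposition Φ = U_Φ Λ_Φ V_Φᴴ, where U_Φ is an N×D complex matrix with U_Φᴴ U_Φ = I, V_Φ is a D×D unitary matrix (V_Φᴴ V_Φ = V_Φ V_Φᴴ = I), and Λ_Φ = diag(φ₁,…,φ_D) with φ_d > 0 for all d. Define the linear precoder V = B V_Φ and the linear decoder Uᴴ = U_Φᴴ. Then simultaneously: (i) Uᴴ H V = Λ_Φ = diag(φ₁,…,φ_D) (channel diagonalization); (ii) V Vᴴ = B Bᴴ = S_x (transmit covariance condition); and (iii) ∑_{d=1}^{D} log₂(1 + |u_dᴴ H v_d|² / ‖u_d‖²) = log₂ det(I + H S_x Hᴴ), where u_d and v_d denote the d-th columns of U and V (capacity-achieving condition); equivalently, det(I_N + H S_x Hᴴ) = ∏_{d=1}^{D} (1 + φ_d²). -/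
/-! Everything follows from the orthonormality relations of the SVD `Φ = H B = U_Φ Λ V_Φᴴ`.
Sandwiching `Φ` between `U_Φᴴ` and `V_Φ` leaves `Λ`; the unitary `V_Φ` cancels in `V Vᴴ`; and
Sylvester's identity `det (1 + X Y) = det (1 + Y X)`, applied once to `Φ Φᴴ` and once to move
`V_Φ` around, gives `det (1 + H S_x Hᴴ) = det (1 + Λᴴ Λ)`. Since the columns of `U_Φ` are unit
vectors, the `d`-th stream carries exactly `log₂ (1 + φ_d²)`. -/

namespace Matrix

variable {m n p q : Type*}

theorem conjTranspose_mul_mul_conjTranspose_mul {R : Type*} [Semiring R] [Star R]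
    [Fintype m] [Fintype n] [Fintype p] [Fintype q] [DecidableEq n] [DecidableEq p]
    {U : Matrix m n R} {W : Matrix q p R} (hU : Uᴴ * U = 1) (hW : Wᴴ * W = 1)
    (Λ : Matrix n p R) : Uᴴ * (U * Λ * Wᴴ) * W = Λ := by
  rw [Matrix.mul_assoc, Matrix.mul_assoc, hW, Matrix.mul_one, ← Matrix.mul_assoc, hU,
    Matrix.one_mul]

theorem mul_mul_conjTranspose_eq_of_mul_conjTranspose_eq_one {R : Type*} [Semiring R]
    [StarRing R] [Fintype n] [DecidableEq n] {W : Matrix n n R} (hW : W * Wᴴ = 1)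
    (B : Matrix m n R) : B * W * (B * W)ᴴ = B * Bᴴ := by
  rw [conjTranspose_mul, Matrix.mul_assoc, ← Matrix.mul_assoc W, hW, Matrix.one_mul]

theorem star_col_dotProduct_mulVec_col {R : Type*} [CommSemiring R] [StarRing R]
    [Fintype m] [Fintype p] (U : Matrix m n R) (H : Matrix m p R) (V : Matrix p n R) (d : n) :
    star (fun i => U i d) ⬝ᵥ (H *ᵥ fun j => V j d) = (Uᴴ * H * V) d d := by
  rw [Matrix.mul_assoc]
  simp [mul_apply, dotProduct, mulVec, Finset.mul_sum]

theorem sum_norm_sq_eq_one_of_conjTranspose_mul_self_eq_one {𝕜 : Type*} [RCLike 𝕜]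
    [Fintype m] [DecidableEq n] {U : Matrix m n 𝕜} (hU : Uᴴ * U = 1) (d : n) :
    ∑ i, ‖U i d‖ ^ 2 = 1 := by
  have h := congrFun (congrFun hU d) d
  simp only [mul_apply, conjTranspose_apply, RCLike.star_def, RCLike.conj_mul, one_apply_eq] at h
  exact_mod_cast h

section CommRing

variable {R : Type*} [CommRing R] [StarRing R] [Fintype m] [Fintype n] [DecidableEq m]
  [DecidableEq n]

theorem det_one_add_mul_mul_conjTranspose {W : Matrix m n R} (hW : Wᴴ * W = 1)
    (X : Matrix n n R) : det (1 + W * X * Wᴴ) = det (1 + X) := by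
  rw [det_one_add_mul_comm, ← Matrix.mul_assoc, hW, Matrix.one_mul]

theorem det_one_add_mul_conjTranspose_of_svd [Fintype p] [DecidableEq p] {U : Matrix m n R}
    {W : Matrix p n R} (hU : Uᴴ * U = 1) (hW : Wᴴ * W = 1) (σ : n → R) :
    det (1 + (U * diagonal σ * Wᴴ) * (U * diagonal σ * Wᴴ)ᴴ) =
      ∏ d, (1 + star (σ d) * σ d) := by
  have hΦ : (U * diagonal σ * Wᴴ)ᴴ * (U * diagonal σ * Wᴴ) =
      W * diagonal (fun d => star (σ d) * σ d) * Wᴴ := by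
    rw [← diagonal_mul_diagonal]
    simp only [conjTranspose_mul, conjTranspose_conjTranspose, diagonal_conjTranspose,
      Matrix.mul_assoc]
    rw [← Matrix.mul_assoc Uᴴ, hU, Matrix.one_mul]
    rfl
  rw [det_one_add_mul_comm, hΦ, det_one_add_mul_mul_conjTranspose hW, ← diagonal_one,
    diagonal_add, det_diagonal]

end CommRing

end Matrix

open Matrix

theorem stmt_0_general {N M D : ℕ}
    (H : Matrix (Fin N) (Fin M) ℂ) (B : Matrix (Fin M) (Fin D) ℂ)
    (Sx : Matrix (Fin M) (Fin M) ℂ) (hSx : Sx = B * Bᴴ)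
    (UΦ : Matrix (Fin N) (Fin D) ℂ) (VΦ : Matrix (Fin D) (Fin D) ℂ) (φ : Fin D → ℝ)
    (hUΦ : UΦᴴ * UΦ = 1) (hVΦ₁ : VΦᴴ * VΦ = 1) (hVΦ₂ : VΦ * VΦᴴ = 1)
    (hSVD : H * B = UΦ * Matrix.diagonal (fun d => (φ d : ℂ)) * VΦᴴ)
    (V : Matrix (Fin M) (Fin D) ℂ) (hV : V = B * VΦ)
    (U : Matrix (Fin N) (Fin D) ℂ) (hU : U = UΦ) :
    -- (i) channel diagonalization
    Uᴴ * H * V = Matrix.diagonal (fun d => (φ d : ℂ)) ∧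
    -- (ii) transmit covariance condition
    V * Vᴴ = Sx ∧
    -- (iii) capacity-achieving condition
    (∑ d : Fin D,
        Real.logb 2 (1 +
          ‖star (fun i => U i d) ⬝ᵥ (H *ᵥ fun j => V j d)‖ ^ 2 /
            (∑ i, ‖U i d‖ ^ 2))) =
      Real.logb 2 ((1 + H * Sx * Hᴴ).det.re) ∧
    -- equivalently, det(I + H Sx Hᴴ) = ∏ d (1 + φ_d²)
    (1 + H * Sx * Hᴴ).det = ∏ d : Fin D, (1 + (φ d : ℂ) ^ 2) := by
  subst hU hV hSx
  have hdiag : Uᴴ * H * (B * VΦ) = diagonal (fun d => (φ d : ℂ)) := by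
    rw [← conjTranspose_mul_mul_conjTranspose_mul hUΦ hVΦ₁ (diagonal _), ← hSVD]
    simp only [Matrix.mul_assoc]
  have hdet : (1 + H * (B * Bᴴ) * Hᴴ).det = ∏ d : Fin D, (1 + (φ d : ℂ) ^ 2) := by
    rw [← Matrix.mul_assoc, Matrix.mul_assoc (H * B), ← conjTranspose_mul, hSVD,
      det_one_add_mul_conjTranspose_of_svd hUΦ hVΦ₁]
    simp only [Complex.star_def, Complex.conj_ofReal, sq]
  have hdet_re : (1 + H * (B * Bᴴ) * Hᴴ).det.re = ∏ d : Fin D, (1 + φ d ^ 2) := by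
    rw [hdet]
    exact_mod_cast Complex.ofReal_re _
  refine ⟨hdiag, mul_mul_conjTranspose_eq_of_mul_conjTranspose_eq_one hVΦ₂ B, ?_, hdet⟩
  rw [hdet_re, Real.logb_prod _ _ fun d _ => by positivity]
  refine Finset.sum_congr rfl fun d _ => ?_
  rw [star_col_dotProduct_mulVec_col, hdiag, diagonal_apply_eq,
    sum_norm_sq_eq_one_of_conjTranspose_mul_self_eq_one hUΦ, div_one, Complex.norm_real,
    Real.norm_eq_abs, sq_abs]

/-- Given a channel `H`, a full-column-rank square-root factor `B` of the
transmit covariance `Sx = B * Bᴴ`, and a truncated SVD `H * B = UΦ * Λ_Φ * VΦᴴ` with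
`UΦᴴ UΦ = I`, `VΦ` unitary, and `Λ_Φ = diag(φ₁,…,φ_D)` positive, the precoder `V = B * VΦ`
and decoder `Uᴴ = UΦᴴ` (i) diagonalize the channel, (ii) satisfy `V Vᴴ = Sx`, and
(iii) achieve the capacity `log₂ det(I + H Sx Hᴴ)`; equivalently
`det(I + H Sx Hᴴ) = ∏ d (1 + φ_d²)`. -/
theorem stmt_0 {N M D : ℕ}
    (H : Matrix (Fin N) (Fin M) ℂ) (B : Matrix (Fin M) (Fin D) ℂ)
    (hBrank : B.rank = D)
    (Sx : Matrix (Fin M) (Fin M) ℂ) (hSx : Sx = B * Bᴴ)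
    (UΦ : Matrix (Fin N) (Fin D) ℂ) (VΦ : Matrix (Fin D) (Fin D) ℂ) (φ : Fin D → ℝ)
    (hφ : ∀ d, 0 < φ d)
    (hUΦ : UΦᴴ * UΦ = 1) (hVΦ₁ : VΦᴴ * VΦ = 1) (hVΦ₂ : VΦ * VΦᴴ = 1)
    (hSVD : H * B = UΦ * Matrix.diagonal (fun d => (φ d : ℂ)) * VΦᴴ)
    (V : Matrix (Fin M) (Fin D) ℂ) (hV : V = B * VΦ)
    (U : Matrix (Fin N) (Fin D) ℂ) (hU : U = UΦ) :
    -- (i) channel diagonalization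
    Uᴴ * H * V = Matrix.diagonal (fun d => (φ d : ℂ)) ∧
    -- (ii) transmit covariance condition
    V * Vᴴ = Sx ∧
    -- (iii) capacity-achieving condition
    (∑ d : Fin D,
        Real.logb 2 (1 +
          ‖star (fun i => U i d) ⬝ᵥ (H *ᵥ fun j => V j d)‖ ^ 2 /
            (∑ i, ‖U i d‖ ^ 2))) =
      Real.logb 2 ((1 + H * Sx * Hᴴ).det.re) ∧
    -- equivalently, det(I + H Sx Hᴴ) = ∏ d (1 + φ_d²)
    (1 + H * Sx * Hᴴ).det = ∏ d : Fin D, (1 + (φ d : ℂ) ^ 2) :=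
  stmt_0_general H B Sx hSx UΦ VΦ φ hUΦ hVΦ₁ hVΦ₂ hSVD V hV U hU
end

section
/- Let H be an N×M complex matrix and S_x an M×M positive semidefinite Hermitian matrix. Then there exists an M×M positive semidefinite Hermitian matrix S̄_x such that H S̄_x Hᴴ = H S_x Hᴴ (hence det(I + H S̄_x Hᴴ) = det(I + H S_x Hᴴ), i.e., S̄_x achieves the same capacity of the MIMO channel H as S_x) and rank(S̄_x) = rank(H S̄_x). -/
/-!
Take `S̄ = Π Sx Π`, where `Π` is the orthogonal projection onto the column space of `Hᴴ`.
It is positive semidefinite as a congruence of `Sx`, and `H Π = H` leaves `H S̄ Hᴴ = H Sx Hᴴ`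
unchanged. The columns of `S̄` lie in the column space of `Hᴴ`, on which `H` is injective
(`H Hᴴ z = 0` forces `Hᴴ z = 0`), so `S̄` and `H S̄` have the same kernel, hence the same rank.
-/

open Matrix ComplexOrder

namespace Matrix

section Rank

variable {m n p R : Type*} [Fintype n]

theorem rank_eq_rank_of_ker_mulVecLin_eq [Field R] {A : Matrix m n R} {B : Matrix p n R}
    (h : LinearMap.ker A.mulVecLin = LinearMap.ker B.mulVecLin) : A.rank = B.rank := by
  have hA := A.mulVecLin.finrank_range_add_finrank_ker
  have hB := B.mulVecLin.finrank_range_add_finrank_ker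
  rw [h] at hA
  unfold rank
  omega

theorem range_mulVecLin_mul_le [Fintype p] [CommSemiring R] (A : Matrix m n R)
    (B : Matrix n p R) : LinearMap.range (A * B).mulVecLin ≤ LinearMap.range A.mulVecLin := by
  rw [mulVecLin_mul]
  exact LinearMap.range_comp_le_range _ _

theorem rank_mul_eq_right_of_range_le_range_conjTranspose [Fintype m] [Fintype p] [Field R]
    [PartialOrder R] [StarRing R] [StarOrderedRing R] (A : Matrix m n R) {B : Matrix n p R}
    (h : LinearMap.range B.mulVecLin ≤ LinearMap.range Aᴴ.mulVecLin) :
    (A * B).rank = B.rank := by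
  refine rank_eq_rank_of_ker_mulVecLin_eq (le_antisymm (fun x hx ↦ ?_) fun x hx ↦ ?_)
  · obtain ⟨z, hz⟩ := h ⟨x, rfl⟩
    simp only [LinearMap.mem_ker, mulVecLin_apply, ← mulVec_mulVec] at hz hx ⊢
    rw [← hz] at hx ⊢
    -- `A Aᴴ z = 0` forces `Aᴴ z = 0`, since `‖Aᴴ z‖² = zᴴ A Aᴴ z`.
    rwa [← conjTranspose_mul_self_mulVec_eq_zero, conjTranspose_conjTranspose, ← mulVec_mulVec]
  · simp only [LinearMap.mem_ker, mulVecLin_apply, ← mulVec_mulVec] at hx ⊢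
    rw [hx, mulVec_zero]

end Rank

section ColSpaceProj

open WithLp

variable {m n 𝕜 : Type*} [RCLike 𝕜] [Fintype m] [DecidableEq m] [Fintype n] [DecidableEq n]

noncomputable def colSpaceProj (A : Matrix m n 𝕜) : Matrix m m 𝕜 :=
  (toEuclideanCLM (n := m) (𝕜 := 𝕜)).symm (LinearMap.range (toEuclideanLin A)).starProjection

theorem colSpaceProj_mulVec (A : Matrix m n 𝕜) (v : m → 𝕜) :
    A.colSpaceProj *ᵥ v =
      ofLp ((LinearMap.range (toEuclideanLin A)).starProjection (toLp 2 v)) := by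
  rw [← ofLp_toLp 2 (A.colSpaceProj *ᵥ v), ← toEuclideanCLM_toLp, colSpaceProj,
    StarAlgEquiv.apply_symm_apply]

theorem isHermitian_colSpaceProj (A : Matrix m n 𝕜) : A.colSpaceProj.IsHermitian := by
  rw [IsHermitian, ← star_eq_conjTranspose, colSpaceProj]
  exact ((toEuclideanCLM (n := m) (𝕜 := 𝕜)).symm.map_star' _).symm.trans
    (congrArg _ (isSelfAdjoint_starProjection _).star_eq)

theorem colSpaceProj_mul_self (A : Matrix m n 𝕜) : A.colSpaceProj * A = A := by
  refine ext_iff_mulVec.mpr fun v ↦ ?_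
  have hAv : toLp 2 (A *ᵥ v) ∈ LinearMap.range (toEuclideanLin A) := ⟨toLp 2 v, rfl⟩
  rw [← mulVec_mulVec, colSpaceProj_mulVec, Submodule.starProjection_eq_self_iff.mpr hAv]

theorem range_mulVecLin_colSpaceProj (A : Matrix m n 𝕜) :
    LinearMap.range A.colSpaceProj.mulVecLin = LinearMap.range A.mulVecLin := by
  refine le_antisymm ?_ ?_
  · rintro _ ⟨v, rfl⟩
    obtain ⟨z, hz⟩ := (LinearMap.range (toEuclideanLin A)).starProjection_apply_mem (toLp 2 v)
    exact ⟨ofLp z, by rw [mulVecLin_apply, mulVecLin_apply, colSpaceProj_mulVec, ← hz]; rfl⟩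
  · conv_lhs => rw [← colSpaceProj_mul_self A]
    exact range_mulVecLin_mul_le _ _

end ColSpaceProj

end Matrix

/-- For any channel `H` and positive semidefinite transmit covariance
`Sx`, there exists a positive semidefinite `S̄x` with `H S̄x Hᴴ = H Sx Hᴴ`
(hence the same capacity `det(I + H S̄x Hᴴ) = det(I + H Sx Hᴴ)`) and
`rank(S̄x) = rank(H S̄x)`. -/
theorem stmt_7 {N M : ℕ}
    (H : Matrix (Fin N) (Fin M) ℂ) (Sx : Matrix (Fin M) (Fin M) ℂ)
    (hSx : Sx.PosSemidef) :
    ∃ Sbar : Matrix (Fin M) (Fin M) ℂ,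
      Sbar.PosSemidef ∧
      H * Sbar * Hᴴ = H * Sx * Hᴴ ∧
      (1 + H * Sbar * Hᴴ).det = (1 + H * Sx * Hᴴ).det ∧
      Sbar.rank = (H * Sbar).rank := by
  set P := Hᴴ.colSpaceProj
  have hP : Pᴴ = P := (isHermitian_colSpaceProj Hᴴ).eq
  have hPH : P * Hᴴ = Hᴴ := colSpaceProj_mul_self Hᴴ
  have hHP : H * P = H := by
    simpa only [conjTranspose_mul, hP, conjTranspose_conjTranspose] using
      congrArg conjTranspose hPH
  have hchannel : H * (P * Sx * P) * Hᴴ = H * Sx * Hᴴ := by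
    rw [← Matrix.mul_assoc, ← Matrix.mul_assoc, hHP, Matrix.mul_assoc, hPH]
  have hpsd : (P * Sx * P).PosSemidef := by
    simpa only [hP] using hSx.conjTranspose_mul_mul_same P
  have hrange : LinearMap.range (P * Sx * P).mulVecLin ≤ LinearMap.range Hᴴ.mulVecLin := by
    rw [← range_mulVecLin_colSpaceProj Hᴴ, Matrix.mul_assoc]
    exact range_mulVecLin_mul_le _ _
  exact ⟨P * Sx * P, hpsd, hchannel, by rw [hchannel],
    (rank_mul_eq_right_of_range_le_range_conjTranspose H hrange).symm⟩
end
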